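/- Let a, b be real numbers with a·b ≠ 0. Then the helicoid in ℝ³ parametrized by (s,t) ↦ (t cos(as), t sin(as), bs) intersects every affine plane of ℝ³. -/

import Mathlib

open Real

/-!
A plane with `γ ≠ 0` meets the axis `t = 0` of the helicoid, which is the whole `z`-axis since
`b ≠ 0`. A plane with `γ = 0` is vertical; since `a ≠ 0`, the rulings `s = const` of the helicoid
run through every horizontal direction, and a ruling in a direction not parallel to the plane
meets it.
-/

theorem exists_mul_cos_add_mul_sin_ne_zero {α β : ℝ} (h : (α, β) ≠ (0, 0)) :
    ∃ θ : ℝ, α * cos θ + β * sin θ ≠ 0 := by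
  by_cases hα : α = 0
  · have hβ : β ≠ 0 := fun hβ => h (by simp [hα, hβ])
    exact ⟨π / 2, by simpa [hα] using hβ⟩
  · exact ⟨0, by simpa using hα⟩

/-- The helicoid `(s,t) ↦ (t cos(as), t sin(as), bs)` with `a·b ≠ 0` intersects
every affine plane `{(x,y,z) : αx + βy + γz = δ}` of `ℝ³`. -/
theorem helicoid_meets_every_plane (a b : ℝ) (hab : a * b ≠ 0)
    (α β γ δ : ℝ) (hcoef : (α, β, γ) ≠ (0, 0, 0)) :
    ∃ s t : ℝ, α * (t * Real.cos (a * s)) + β * (t * Real.sin (a * s)) + γ * (b * s) = δ := by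
  obtain ⟨ha, hb⟩ := mul_ne_zero_iff.mp hab
  by_cases hγ : γ = 0
  · obtain ⟨θ, hθ⟩ := exists_mul_cos_add_mul_sin_ne_zero (α := α) (β := β)
      (fun h => hcoef (by simp_all))
    refine ⟨θ / a, δ / (α * cos θ + β * sin θ), ?_⟩
    rw [mul_div_cancel₀ θ ha, hγ]
    field_simp
    ring
  · exact ⟨δ / (γ * b), 0, by field_simp; ring⟩
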